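/- For every even integer n ≥ 2, Aⁿ·X₁ = X₁; consequently, for every integer p ≥ 1, A^{pn}·X₁ = X₁. -/
import Mathlib


/-- The `n × n` integer matrix `A` (0-indexed): row `0` has entry `1` in column `n-1`
and `0` elsewhere; for `i ≥ 1`, row `i` has entry `-1` in column `i-1`, entry `2` in
column `n-1`, and `0` elsewhere. (This is the paper's matrix with rows/columns
indexed `1,…,n`, shifted to `0,…,n-1`.) -/
def torusMatrix (n : ℕ) : Matrix (Fin n) (Fin n) ℤ :=
  fun i j =>
    if i.val = 0 then (if j.val = n - 1 then 1 else 0)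
    else (if j.val = i.val - 1 then -1 else 0) + (if j.val = n - 1 then 2 else 0)

/-- The vector `X₁ ∈ ℤⁿ` with entries `1` in positions `1` and `n`
(0-indexed: `0` and `n-1`) and `0` elsewhere. -/
def X1 (n : ℕ) : Fin n → ℤ :=
  fun j => if j.val = 0 ∨ j.val = n - 1 then 1 else 0

/-- The orbit of `X1` under `torusMatrix`, guessed explicitly. -/
def auxF (n k : ℕ) : Fin n → ℤ := fun j =>
  if k = 0 then (if j.val = 0 ∨ j.val = n - 1 then 1 else 0)
  else if Even k then (if j.val = k - 1 ∨ j.val = k then 3 else 2)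
  else (if j.val = k - 1 ∨ j.val = k then 1 else 2)

lemma sum_ite_val {n : ℕ} (c : ℕ) (hc : c < n) (v : Fin n → ℤ) (a : ℤ) :
    ∑ j : Fin n, (if j.val = c then a else 0) * v j = a * v ⟨c, hc⟩ := by
  rw [Finset.sum_eq_single (⟨c, hc⟩ : Fin n)]
  · simp
  · intro b _ hb
    have : b.val ≠ c := fun h => hb (Fin.ext h)
    simp [this]
  · simp

lemma mulVec_torus {n : ℕ} (hn : 2 ≤ n) (v : Fin n → ℤ) (i : Fin n) :
    (torusMatrix n).mulVec v i =
      if i.val = 0 then v ⟨n - 1, by omega⟩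
      else -v ⟨i.val - 1, by omega⟩ + 2 * v ⟨n - 1, by omega⟩ := by
  simp only [Matrix.mulVec, dotProduct, torusMatrix]
  by_cases h : i.val = 0
  · simp only [h, if_true]
    rw [show (∑ j : Fin n, (if j.val = n - 1 then (1:ℤ) else 0) * v j)
        = 1 * v ⟨n-1, by omega⟩ from sum_ite_val (n-1) (by omega) v 1]
    ring
  · simp only [h, if_false]
    have : (∑ j : Fin n, ((if j.val = i.val - 1 then (-1:ℤ) else 0)
        + (if j.val = n - 1 then 2 else 0)) * v j)
        = (∑ j : Fin n, (if j.val = i.val - 1 then (-1:ℤ) else 0) * v j)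
        + (∑ j : Fin n, (if j.val = n - 1 then (2:ℤ) else 0) * v j) := by
      rw [← Finset.sum_add_distrib]
      apply Finset.sum_congr rfl
      intro j _; ring
    rw [this, sum_ite_val (i.val - 1) (by omega) v (-1),
      sum_ite_val (n - 1) (by omega) v 2]
    ring

lemma step_aux {n : ℕ} (hn : 2 ≤ n) (k : ℕ) (hk : k < n - 1) :
    (torusMatrix n).mulVec (auxF n k) = auxF n (k + 1) := by
  funext i
  rw [mulVec_torus hn]
  have hi := i.isLt
  rcases Nat.eq_zero_or_pos k with hk0 | hk1
  · subst hk0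
    simp only [auxF]
    norm_num [Nat.even_add_one]
    split_ifs <;> omega
  · have hkne : k ≠ 0 := by omega
    have hk1ne : k + 1 ≠ 0 := by omega
    simp only [auxF, hkne, hk1ne, if_false, Nat.even_add_one]
    by_cases hek : Even k
    · simp only [hek, if_true, not_true, if_false]
      split_ifs <;> omega
    · simp only [hek, if_false, not_false_iff, if_true]
      split_ifs <;> omega

lemma step_last {n : ℕ} (hn : 2 ≤ n) (hne : Even n) :
    (torusMatrix n).mulVec (auxF n (n - 1)) = X1 n := by
  funext i
  rw [mulVec_torus hn]
  have hi := i.isLt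
  have hodd : ¬ Even (n - 1) := by
    rcases hne with ⟨m, hm⟩
    rcases Nat.even_or_odd (n - 1) with h | h
    · rcases h with ⟨t, ht⟩; omega
    · exact Nat.not_even_iff_odd.mpr h
  have hne0 : (n : ℕ) - 1 ≠ 0 := by omega
  simp only [auxF, X1, hne0, if_false, hodd, eq_self_iff_true, or_true, if_true]
  split_ifs <;> omega

lemma auxF_zero (n : ℕ) : auxF n 0 = X1 n := by
  funext j; simp [auxF, X1]

lemma pow_mulVec_auxF {n : ℕ} (hn : 2 ≤ n) :
    ∀ k, k ≤ n - 1 → ((torusMatrix n) ^ k).mulVec (X1 n) = auxF n k := by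
  intro k
  induction k with
  | zero => intro _; simp [auxF_zero]
  | succ m ih =>
    intro hm
    have h1 : m ≤ n - 1 := by omega
    have h2 : m < n - 1 := by omega
    rw [pow_succ', ← Matrix.mulVec_mulVec, ih h1, step_aux hn m h2]

lemma pow_n_fixed {n : ℕ} (hn : 2 ≤ n) (hne : Even n) :
    ((torusMatrix n) ^ n).mulVec (X1 n) = X1 n := by
  have hp : (torusMatrix n) ^ n = torusMatrix n * (torusMatrix n) ^ (n - 1) := by
    rw [← pow_succ']
    congr 1
    omega
  rw [hp, ← Matrix.mulVec_mulVec, pow_mulVec_auxF hn (n - 1) le_rfl, step_last hn hne]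

/-- For every even integer `n ≥ 2`, `Aⁿ·X₁ = X₁`; consequently, for every
integer `p ≥ 1`, `A^(pn)·X₁ = X₁`. -/
theorem statement6 (n : ℕ) (hn : 2 ≤ n) (hne : Even n) :
    ((torusMatrix n) ^ n).mulVec (X1 n) = X1 n ∧
      ∀ p : ℕ, 1 ≤ p → ((torusMatrix n) ^ (p * n)).mulVec (X1 n) = X1 n := by
  have base := pow_n_fixed hn hne
  refine ⟨base, ?_⟩
  intro p hp
  induction p with
  | zero => omega
  | succ q ih =>
    rcases Nat.eq_zero_or_pos q with hq | hq
    · subst hq; simpa using base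
    · have : (q + 1) * n = q * n + n := by ring
      rw [this, pow_add, ← Matrix.mulVec_mulVec, base, ih hq]
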